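/- Let τ be a correct compositional translation to LOCKSIMPLE_{k,IS}, k ≥ 2. If τ(!) has blocking type P_i (solo execution deadlocks at the first P_i, with no earlier P_i or T_i), then the initial store satisfies IS_i = full. If τ(!) has blocking type P_i P_i, then either the first symbol of τ(!) mentioning lock i is T_i, or IS_i = empty. The same statements hold for τ(?). -/

import Mathlib

/-- Symbols of SYNCSIMPLE: `!` (bang) and `?` (ques). -/
inductive SSym | bang | ques
deriving DecidableEq

/-- A SYNCSIMPLE subprocess: a string over {!,?} ending with `0` (false) or `✓` (true). -/
abbrev SSub := List SSym × Bool

/-- A SYNCSIMPLE process: a multiset of subprocesses. -/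
abbrev SProc := Multiset SSub

/-- The SYS reduction: a leading `!` and a leading `?` of two subprocesses are consumed. -/
def SysStep (P Q : SProc) : Prop :=
  ∃ (u1 u2 : List SSym) (b1 b2 : Bool) (R : SProc),
    P = (SSym.bang :: u1, b1) ::ₘ (SSym.ques :: u2, b2) ::ₘ R ∧
    Q = (u1, b1) ::ₘ (u2, b2) ::ₘ R

/-- A process is successful if it contains the subprocess `✓`. -/
def SSuccessful (P : SProc) : Prop := (([], true) : SSub) ∈ P

def SMayConv (P : SProc) : Prop :=
  ∃ Q, Relation.ReflTransGen SysStep P Q ∧ SSuccessful Q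

def SMustConv (P : SProc) : Prop :=
  ∀ Q, Relation.ReflTransGen SysStep P Q → SMayConv Q

/-- Lock operations: put `P_i` and take `T_i`. -/
inductive LOp | put | take
deriving DecidableEq

abbrev LSym (k : ℕ) := LOp × Fin k
abbrev LSub (k : ℕ) := List (LSym k) × Bool
abbrev LProc (k : ℕ) := Multiset (LSub k)
/-- The store of `k` locks: `true` = full (■), `false` = empty (□). -/
abbrev Store (k : ℕ) := Fin k → Bool

/-- LOCKSIMPLE step: `P_i` fills an empty lock `i` (blocks if full);
    `T_i` empties lock `i` and never blocks. -/
def LockStep {k : ℕ} : (LProc k × Store k) → (LProc k × Store k) → Prop :=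
  fun s t => ∃ (i : Fin k) (u : List (LSym k)) (b : Bool) (R : LProc k),
    ((s.1 = ((LOp.put, i) :: u, b) ::ₘ R ∧ s.2 i = false ∧
      t.1 = (u, b) ::ₘ R ∧ t.2 = Function.update s.2 i true) ∨
     (s.1 = ((LOp.take, i) :: u, b) ::ₘ R ∧
      t.1 = (u, b) ::ₘ R ∧ t.2 = Function.update s.2 i false))

def LSuccessful {k : ℕ} (s : LProc k × Store k) : Prop := (([], true) : LSub k) ∈ s.1

def LMayConv {k : ℕ} (s : LProc k × Store k) : Prop :=
  ∃ t, Relation.ReflTransGen LockStep s t ∧ LSuccessful t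

def LMustConv {k : ℕ} (s : LProc k × Store k) : Prop :=
  ∀ t, Relation.ReflTransGen LockStep s t → LMayConv t

/-- The compositional translation determined by the strings `tb = τ(!)` and `tq = τ(?)`,
    applied to a subprocess. -/
def transSub {k : ℕ} (tb tq : List (LSym k)) (u : SSub) : LSub k :=
  (u.1.flatMap (fun c => match c with | SSym.bang => tb | SSym.ques => tq), u.2)

/-- The compositional translation applied to a process. -/
def transProc {k : ℕ} (tb tq : List (LSym k)) (P : SProc) : LProc k :=
  P.map (transSub tb tq)

/-- Correctness of the compositional translation `(tb, tq)` with initial store `IS`: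
    may- and must-convergence are preserved and reflected. -/
def Correct {k : ℕ} (IS : Store k) (tb tq : List (LSym k)) : Prop :=
  ∀ P : SProc,
    (SMayConv P ↔ LMayConv (transProc tb tq P, IS)) ∧
    (SMustConv P ↔ LMustConv (transProc tb tq P, IS))

/-- The solo execution of the string `s` from store `IS` reaches the point where
    `(put, i) :: rest` remains and deadlocks there since lock `i` is full. -/
def SoloBlocked {k : ℕ} (IS : Store k) (s : List (LSym k)) (i : Fin k)
    (rest : List (LSym k)) : Prop :=
  ∃ C : Store k,
    Relation.ReflTransGen LockStep (({(s, false)} : LProc k), IS)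
      (({((LOp.put, i) :: rest, false)} : LProc k), C) ∧
    C i = true

/-- Blocking type `P_i`: the blocking prefix is `R P_i` with `R` free of `P_i, T_i`. -/
def BlockingTypeP {k : ℕ} (IS : Store k) (s : List (LSym k)) (i : Fin k) : Prop :=
  ∃ r rest, s = r ++ (LOp.put, i) :: rest ∧ (∀ x ∈ r, x.2 ≠ i) ∧
    SoloBlocked IS s i rest

/-- Blocking type `P_i P_i`: the blocking prefix is `R₁ P_i R₂ P_i` with
    `R₂` free of `P_i, T_i`, deadlocking exactly before the last `P_i`. -/
def BlockingTypePP {k : ℕ} (IS : Store k) (s : List (LSym k)) (i : Fin k) : Prop :=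
  ∃ r1 r2 rest, s = r1 ++ (LOp.put, i) :: r2 ++ (LOp.put, i) :: rest ∧
    (∀ x ∈ r2, x.2 ≠ i) ∧ SoloBlocked IS s i rest

/-- `s` has `T_i` as its first symbol mentioning lock `i`. -/
def FirstISymIsTake {k : ℕ} (s : List (LSym k)) (i : Fin k) : Prop :=
  ∃ r rest, s = r ++ (LOp.take, i) :: rest ∧ ∀ x ∈ r, x.2 ≠ i

/-! A string running alone interacts with nothing, so its execution is just a sequential run
of the string on the store. A lock that no consumed symbol mentions keeps its initial value,
which settles blocking type `P_i`. A run starting with lock `i` full cannot get past a `P_i`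
unless a `T_i` comes first; the run of type `P_i P_i` consumes a `P_i`, so if `IS_i = ■` its
first symbol on lock `i` is `T_i`. -/

/-- `SoloRun C p D`: the string `p`, executed alone from store `C`, runs to completion
and leaves store `D`. -/
inductive SoloRun {k : ℕ} : Store k → List (LSym k) → Store k → Prop
  | nil (C : Store k) : SoloRun C [] C
  | put {C D : Store k} {j : Fin k} {p : List (LSym k)} :
      C j = false → SoloRun (Function.update C j true) p D → SoloRun C ((LOp.put, j) :: p) D
  | take {C D : Store k} {j : Fin k} {p : List (LSym k)} :
      SoloRun (Function.update C j false) p D → SoloRun C ((LOp.take, j) :: p) D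

theorem FirstISymIsTake.cons {k : ℕ} {s : List (LSym k)} {i : Fin k} {x : LSym k}
    (hx : x.2 ≠ i) (h : FirstISymIsTake s i) : FirstISymIsTake (x :: s) i := by
  obtain ⟨r, rest, rfl, hr⟩ := h
  exact ⟨x :: r, rest, rfl, by simpa [hx] using hr⟩

theorem FirstISymIsTake.append_right {k : ℕ} {s : List (LSym k)} {i : Fin k}
    (h : FirstISymIsTake s i) (u : List (LSym k)) : FirstISymIsTake (s ++ u) i := by
  obtain ⟨r, rest, rfl, hr⟩ := h
  exact ⟨r, rest ++ u, by simp, hr⟩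

namespace SoloRun

variable {k : ℕ} {C D : Store k} {p : List (LSym k)} {i : Fin k}

theorem apply_eq_of_forall_ne (h : SoloRun C p D) (hp : ∀ x ∈ p, x.2 ≠ i) : D i = C i := by
  induction h with
  | nil => rfl
  | @put C D j p _ _ ih | @take C D j p _ ih =>
    have hji : j ≠ i := hp _ List.mem_cons_self
    rw [ih fun x hx => hp x (List.mem_cons_of_mem _ hx), Function.update_of_ne hji.symm]

theorem firstISymIsTake (h : SoloRun C p D) (hC : C i = true) (hi : ∃ x ∈ p, x.2 = i) :
    FirstISymIsTake p i := by
  induction h with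
  | nil => simp at hi
  | @put C D j p hCj _ ih =>
    have hji : j ≠ i := by rintro rfl; simp [hC] at hCj
    refine (ih ?_ ?_).cons hji
    · rwa [Function.update_of_ne hji.symm]
    · simpa [hji] using hi
  | @take C D j p _ ih =>
    by_cases hji : j = i
    · exact ⟨[], p, by rw [hji]; rfl, by simp⟩
    refine (ih ?_ ?_).cons hji
    · rwa [Function.update_of_ne (Ne.symm hji)]
    · simpa [hji] using hi

end SoloRun

/-- The only steps of a one-string process consume its first symbol. -/
theorem LockStep.exists_of_singleton {k : ℕ} {s : List (LSym k)} {b : Bool} {C : Store k}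
    {t : LProc k × Store k} (h : LockStep (({(s, b)} : LProc k), C) t) :
    ∃ x s' C', s = x :: s' ∧ t = (({(s', b)} : LProc k), C') ∧
      ∀ p D, SoloRun C' p D → SoloRun C (x :: p) D := by
  obtain ⟨j, u, bb, R, ⟨hs, hCj, ht1, ht2⟩ | ⟨hs, ht1, ht2⟩⟩ := h <;>
  · obtain ⟨⟨rfl, rfl⟩, rfl⟩ := (Multiset.singleton_eq_cons_iff R).1 hs
    refine ⟨_, u, t.2, rfl, Prod.ext ht1 rfl, fun p D hp => ?_⟩
    rw [ht2] at hp
    first | exact SoloRun.put hCj hp | exact SoloRun.take hp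

theorem SoloRun.exists_of_reflTransGen {k : ℕ} {s u : List (LSym k)} {b : Bool}
    {C D : Store k}
    (h : Relation.ReflTransGen LockStep (({(s, b)} : LProc k), C) (({(u, b)} : LProc k), D)) :
    ∃ p, s = p ++ u ∧ SoloRun C p D := by
  suffices ∀ a, Relation.ReflTransGen LockStep a (({(u, b)} : LProc k), D) →
      ∀ s C, a = (({(s, b)} : LProc k), C) → ∃ p, s = p ++ u ∧ SoloRun C p D from
    this _ h s C rfl
  intro a ha
  induction ha using Relation.ReflTransGen.head_induction_on with
  | refl =>
    intro s C hsC
    obtain ⟨hs, rfl⟩ := Prod.mk.inj hsC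
    obtain rfl : u = s := congrArg Prod.fst (Multiset.singleton_inj.1 hs)
    exact ⟨[], rfl, SoloRun.nil D⟩
  | head hstep _ ih =>
    rintro s C rfl
    obtain ⟨x, s', C', rfl, rfl, hrun⟩ := hstep.exists_of_singleton
    obtain ⟨p, rfl, hp⟩ := ih s' C' rfl
    exact ⟨x :: p, rfl, hrun p D hp⟩

theorem SoloBlocked.exists_soloRun {k : ℕ} {IS : Store k} {s rest : List (LSym k)}
    {i : Fin k} (h : SoloBlocked IS s i rest) :
    ∃ p C, s = p ++ (LOp.put, i) :: rest ∧ SoloRun IS p C ∧ C i = true := by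
  obtain ⟨C, hreach, hC⟩ := h
  obtain ⟨p, hs, hp⟩ := SoloRun.exists_of_reflTransGen hreach
  exact ⟨p, C, hs, hp, hC⟩

theorem BlockingTypeP.apply_eq_true {k : ℕ} {IS : Store k} {s : List (LSym k)} {i : Fin k}
    (h : BlockingTypeP IS s i) : IS i = true := by
  obtain ⟨r, rest, hs, hr, hblock⟩ := h
  obtain ⟨p, C, hs', hrun, hC⟩ := hblock.exists_soloRun
  obtain rfl : p = r := List.append_cancel_right (hs'.symm.trans hs)
  rw [← hrun.apply_eq_of_forall_ne hr, hC]

theorem BlockingTypePP.firstISymIsTake_or_apply_eq_false {k : ℕ} {IS : Store k}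
    {s : List (LSym k)} {i : Fin k} (h : BlockingTypePP IS s i) :
    FirstISymIsTake s i ∨ IS i = false := by
  rcases Bool.eq_false_or_eq_true (IS i) with hIS | hIS
  · obtain ⟨r1, r2, rest, hs, -, hblock⟩ := h
    obtain ⟨p, C, hs', hrun, -⟩ := hblock.exists_soloRun
    obtain rfl : p = r1 ++ (LOp.put, i) :: r2 := List.append_cancel_right (hs'.symm.trans hs)
    left
    rw [hs]
    exact (hrun.firstISymIsTake hIS ⟨(LOp.put, i), by simp, rfl⟩).append_right _
  · exact Or.inr hIS

/-- for a correct translation with `k ≥ 2` locks: blocking type `P_i`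
of `τ(!)` forces `IS_i = ■`; blocking type `P_iP_i` of `τ(!)` forces that the first
symbol of `τ(!)` mentioning lock `i` is `T_i`, or `IS_i = □`. Same for `τ(?)`. -/
theorem blocking_type_vs_store :
    ∀ (k : ℕ), 2 ≤ k → ∀ (IS : Store k) (tb tq : List (LSym k)) (i : Fin k),
      Correct IS tb tq →
      (BlockingTypeP IS tb i → IS i = true) ∧
      (BlockingTypePP IS tb i → (FirstISymIsTake tb i ∨ IS i = false)) ∧
      (BlockingTypeP IS tq i → IS i = true) ∧
      (BlockingTypePP IS tq i → (FirstISymIsTake tq i ∨ IS i = false)) := by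
  intro k _ IS tb tq i _
  exact ⟨fun h => h.apply_eq_true, fun h => h.firstISymIsTake_or_apply_eq_false,
    fun h => h.apply_eq_true, fun h => h.firstISymIsTake_or_apply_eq_false⟩
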